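/- arXiv:2110.08492 — 2 statements merged into one kernel-verified Lean document; each statement's English description precedes it below -/
import Mathlib

section
/- Let X be a connected, locally finite graph with infinite motion, let x₀ be a vertex, and let i ≥ 0. If σ and τ are automorphisms of X fixing x₀ that agree on the sphere S_i(x₀) = {v : dist(x₀,v) = i}, then σ and τ agree on the entire ball B_i(x₀) = {v : dist(x₀,v) ≤ i}. Equivalently, the restriction epimorphism from the restriction of Aut(X)_{x₀} to the ball B_i(x₀) onto its restriction to the sphere S_i(x₀) is an isomorphism. -/
open SimpleGraph

private lemma iso_dist_le {V : Type*} {X : SimpleGraph V} (hconn : X.Connected)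
    (g : X ≃g X) (u v : V) : X.dist (g u) (g v) ≤ X.dist u v := by
  obtain ⟨p, hp⟩ := hconn.exists_walk_length_eq_dist u v
  calc X.dist (g u) (g v) ≤ (p.map g.toHom).length := SimpleGraph.dist_le _
    _ = p.length := p.length_map _
    _ = X.dist u v := hp

private lemma iso_dist {V : Type*} {X : SimpleGraph V} (hconn : X.Connected)
    (g : X ≃g X) (u v : V) : X.dist (g u) (g v) = X.dist u v := by
  refine le_antisymm (iso_dist_le hconn g u v) ?_
  have := iso_dist_le hconn g.symm (g u) (g v)
  simpa using this

private lemma adj_dist_le {V : Type*} {X : SimpleGraph V} (hconn : X.Connected)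
    {x u v : V} (h : X.Adj u v) : X.dist x v ≤ X.dist x u + 1 := by
  calc X.dist x v ≤ X.dist x u + X.dist u v := hconn.dist_triangle
    _ ≤ X.dist x u + 1 := by
        have : X.dist u v = 1 := by rwa [SimpleGraph.dist_eq_one_iff_adj]
        omega

private lemma ball_finite {V : Type*} {X : SimpleGraph V} (hconn : X.Connected)
    (hlf : X.LocallyFinite) (x₀ : V) (n : ℕ) :
    {v : V | X.dist x₀ v ≤ n}.Finite := by
  induction n with
  | zero =>
    have : {v : V | X.dist x₀ v ≤ 0} ⊆ {x₀} := by
      intro v hv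
      simp only [Set.mem_setOf_eq, Nat.le_zero] at hv
      have := (hconn.dist_eq_zero_iff (u := x₀) (v := v)).mp hv
      simp [this.symm]
    exact Set.Finite.subset (Set.finite_singleton x₀) this
  | succ n ih =>
    have hsub : {v : V | X.dist x₀ v ≤ n + 1} ⊆
        {v : V | X.dist x₀ v ≤ n} ∪ ⋃ u ∈ {v : V | X.dist x₀ v ≤ n}, X.neighborSet u := by
      intro v hv
      simp only [Set.mem_setOf_eq] at hv
      rcases Nat.lt_or_ge (X.dist x₀ v) (n + 1) with h | h
      · exact Or.inl (by simpa using Nat.lt_succ_iff.mp h)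
      · have hd : X.dist v x₀ = n + 1 := by rw [X.dist_comm]; exact le_antisymm hv h
        obtain ⟨p, hp⟩ := hconn.exists_walk_length_eq_dist v x₀
        rw [hd] at hp
        cases p with
        | nil => simp at hp
        | cons hadj q =>
          rename_i u
          simp only [Walk.length_cons, Nat.succ_inj] at hp
          refine Or.inr ?_
          refine Set.mem_biUnion (show u ∈ {v : V | X.dist x₀ v ≤ n} from ?_) hadj.symm
          simp only [Set.mem_setOf_eq]
          calc X.dist x₀ u ≤ q.reverse.length := SimpleGraph.dist_le _
            _ = n := by simpa using hp
    exact Set.Finite.subset (ih.union (Set.Finite.biUnion ih fun u _ => (X.neighborSet u).toFinite)) hsub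


/-- **Spheres determine balls.**
Let `X` be a connected, locally finite graph with infinite motion, let `x₀` be a vertex
and let `i ≥ 0`.  If two automorphisms `σ`, `τ` of `X` fixing `x₀` agree on the sphere
of radius `i` around `x₀`, then they agree on the whole ball of radius `i` around `x₀`
(equivalently, the restriction epimorphism from the restriction of `Aut(X)_{x₀}` to the
ball onto its restriction to the sphere is an isomorphism). -/
theorem sphere_determines_ball {V : Type*} (X : SimpleGraph V)
    (hconn : X.Connected) (hlf : X.LocallyFinite)
    (hmotion : ∀ σ : X ≃g X, (∃ v, σ v ≠ v) → {v : V | σ v ≠ v}.Infinite)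
    (x₀ : V) (i : ℕ) (σ τ : X ≃g X)
    (hσ : σ x₀ = x₀) (hτ : τ x₀ = x₀)
    (hagree : ∀ v : V, X.dist x₀ v = i → σ v = τ v) :
    ∀ v : V, X.dist x₀ v ≤ i → σ v = τ v := by
  -- the automorphism g = σ⁻¹ ∘ τ
  set g : X ≃g X := τ.trans σ.symm with hg
  have hgx₀ : g x₀ = x₀ := by
    apply σ.injective
    simp only [hg, RelIso.trans_apply, hτ, RelIso.apply_symm_apply, hσ]
  have hgd : ∀ v, X.dist x₀ (g v) = X.dist x₀ v := by
    intro v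
    conv_lhs => rw [← hgx₀]
    exact iso_dist hconn g x₀ v
  have hgsphere : ∀ v, X.dist x₀ v = i → g v = v := by
    intro v hv
    apply σ.injective
    simp only [hg, RelIso.trans_apply, RelIso.apply_symm_apply]
    exact (hagree v hv).symm
  -- key dichotomy used for adjacency across the sphere
  have key : ∀ u v : V, X.dist x₀ u ≤ i → ¬ X.dist x₀ v ≤ i →
      (X.Adj u v ∨ X.Adj (g u) v) → g u = u := by
    intro u v hu hv hadj
    refine hgsphere u (le_antisymm hu ?_)
    rcases hadj with hadj | hadj
    · have := adj_dist_le hconn (x := x₀) hadj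
      omega
    · have := adj_dist_le hconn (x := x₀) hadj
      rw [hgd] at this
      omega
  -- the surgered automorphism: g inside the ball, identity outside
  let f : V → V := fun v => if X.dist x₀ v ≤ i then g v else v
  let e : V ≃ V :=
    { toFun := f
      invFun := fun v => if X.dist x₀ v ≤ i then g.symm v else v
      left_inv := by
        intro v
        by_cases hv : X.dist x₀ v ≤ i
        · simp only [f, hv, if_pos, hgd v, RelIso.symm_apply_apply]
        · simp only [f, hv, if_neg, if_false, not_false_iff]
      right_inv := by
        intro v
        by_cases hv : X.dist x₀ v ≤ i
        · have : X.dist x₀ (g.symm v) = X.dist x₀ v := by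
            conv_rhs => rw [show v = g (g.symm v) from (RelIso.apply_symm_apply g v).symm, hgd]
          simp only [f, hv, this, if_pos, RelIso.apply_symm_apply]
        · simp only [f, hv, if_neg, if_false, not_false_iff] }
  have hadj_iff : ∀ u v : V, X.Adj (e u) (e v) ↔ X.Adj u v := by
    intro u v
    by_cases hu : X.dist x₀ u ≤ i <;> by_cases hv : X.dist x₀ v ≤ i <;>
      simp only [e, f, Equiv.coe_fn_mk, hu, hv, if_pos, if_neg, if_true, if_false,
        not_false_iff]
    · exact Iso.map_adj_iff g
    · constructor
      · intro h; rwa [key u v hu hv (Or.inr h)] at h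
      · intro h; rwa [key u v hu hv (Or.inl h)]
    · constructor
      · intro h; rwa [key v u hv hu (Or.inr h.symm)] at h
      · intro h; rwa [key v u hv hu (Or.inl h.symm)]
  let h : X ≃g X := ⟨e, hadj_iff _ _⟩
  have hball : {v : V | h v ≠ v} ⊆ {v : V | X.dist x₀ v ≤ i} := by
    intro v hv
    simp only [Set.mem_setOf_eq] at hv ⊢
    by_contra hc
    exact hv (by simp only [h, e, f, RelIso.coe_fn_mk, Equiv.coe_fn_mk, hc, if_neg,
      not_false_iff])
  have hfin : ¬ {v : V | h v ≠ v}.Infinite := fun hinf =>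
    hinf ((ball_finite hconn hlf x₀ i).subset hball)
  have hid : ∀ v, h v = v := by
    intro v
    by_contra hc
    exact hfin (hmotion h ⟨v, hc⟩)
  intro v hv
  have := hid v
  simp only [h, e, f, RelIso.coe_fn_mk, Equiv.coe_fn_mk, hv, if_pos] at this
  simp only [hg, RelIso.trans_apply] at this
  have h2 := congrArg σ this
  rw [RelIso.apply_symm_apply] at h2
  exact h2.symm
end

section
/- There exists a constant c₀ such that every primitive solvable permutation group G ≤ Sym(Ω) of degree |Ω| ≥ c₀ admits at least five G-asymmetric subsets of pairwise different sizes: there exist Δ₁, …, Δ₅ ⊆ Ω with |Δ₁|, …, |Δ₅| pairwise distinct such that each Δ_i has trivial setwise stabilizer in G. -/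
open MulAction



/-- The setwise stabilizer of `Δ` in the permutation group `G ≤ Sym(Ω)`:
the subgroup `{g ∈ G : g(Δ) = Δ}`. -/
def setwiseStabilizer {Ω : Type*} (G : Subgroup (Equiv.Perm Ω)) (Δ : Set Ω) :
    Subgroup ↥G where
  carrier := {g : ↥G | (g : Equiv.Perm Ω) '' Δ = Δ}
  one_mem' := by simp
  mul_mem' := by
    intro a b ha hb
    simp only [Set.mem_setOf_eq] at *
    rw [Subgroup.coe_mul, Equiv.Perm.coe_mul, Set.image_comp, hb, ha]
  inv_mem' := by
    intro a ha
    simp only [Set.mem_setOf_eq] at *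
    conv_lhs => rw [← ha]
    rw [← Set.image_comp]
    simp



open Subgroup in
lemma divisor_le_half {d m : ℕ} (hd : d ∣ m) (hne : d ≠ m) (hm : m ≠ 0) : 2 * d ≤ m := by
  obtain ⟨k, rfl⟩ := hd
  rcases Nat.lt_or_ge k 2 with hk | hk
  · interval_cases k <;> simp_all
  · calc 2 * d ≤ k * d := Nat.mul_le_mul_right d hk
    _ = d * k := Nat.mul_comm _ _

open Subgroup in
lemma subgroup_eq_of_le_of_card_le {M : Type*} [Group M] [Finite M] {K H : Subgroup M}
    (h : K ≤ H) (hc : Nat.card H ≤ Nat.card K) : K = H := by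
  have h1 : (K : Set M) ⊆ (H : Set M) := h
  have := Set.eq_of_subset_of_ncard_le h1 (by
    rwa [← Nat.card_coe_set_eq, ← Nat.card_coe_set_eq]) (Set.toFinite _)
  exact SetLike.ext' this

open Subgroup in
lemma exists_small_gens {M : Type*} [Group M] [Finite M] (H : Subgroup M) :
    ∃ S : Finset M, Subgroup.closure (S : Set M) = H ∧ 2 ^ S.card ≤ Nat.card H := by
  classical
  suffices h : ∀ (d : ℕ) (K : Subgroup M) (T : Finset M), K ≤ H →
      Subgroup.closure (T : Set M) = K → 2 ^ T.card ≤ Nat.card K →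
      Nat.card H ≤ Nat.card K + d →
      ∃ S : Finset M, Subgroup.closure (S : Set M) = H ∧ 2 ^ S.card ≤ Nat.card H by
    refine h (Nat.card H) ⊥ ∅ bot_le (by simp) (by simp [Subgroup.card_bot]) ?_
    simp [Subgroup.card_bot]
  intro d
  induction d with
  | zero =>
    intro K T hKH hcl hcard hle
    obtain rfl := subgroup_eq_of_le_of_card_le hKH (by omega)
    exact ⟨T, hcl, hcard⟩
  | succ d ih =>
    intro K T hKH hcl hcard hle
    by_cases hKH' : K = H
    · exact ⟨T, hKH' ▸ hcl, hKH' ▸ hcard⟩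
    · obtain ⟨x, hxH, hxK⟩ : ∃ x ∈ H, x ∉ K := by
        by_contra hcon
        push_neg at hcon
        exact hKH' (le_antisymm hKH hcon)
      set K' : Subgroup M := K ⊔ Subgroup.closure {x} with hK'
      have hcl' : Subgroup.closure ((insert x T : Finset M) : Set M) = K' := by
        rw [Finset.coe_insert, Set.insert_eq, Subgroup.closure_union, hcl, sup_comm]
      have hK'le : K' ≤ H := sup_le hKH ((Subgroup.closure_le H).2 (by simpa using hxH))
      have hKK' : K < K' := by
        refine lt_of_le_of_ne le_sup_left ?_
        intro hEq
        exact hxK (hEq ▸ (le_sup_right (α := Subgroup M) (Subgroup.mem_closure_singleton_self x)))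
      have hdvd : Nat.card K ∣ Nat.card K' := Subgroup.card_dvd_of_le hKK'.le
      have hne : Nat.card K ≠ Nat.card K' := by
        intro hEq
        exact hKK'.ne (subgroup_eq_of_le_of_card_le hKK'.le hEq.ge)
      have hpos : Nat.card K' ≠ 0 := Nat.card_pos.ne'
      have h2 : 2 * Nat.card K ≤ Nat.card K' := divisor_le_half hdvd hne hpos
      refine ih K' (insert x T) hK'le hcl' ?_ ?_
      · calc 2 ^ (insert x T).card ≤ 2 ^ (T.card + 1) := by
              exact Nat.pow_le_pow_right (by norm_num) (Finset.card_insert_le x T)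
        _ = 2 * 2 ^ T.card := by ring
        _ ≤ 2 * Nat.card K := by omega
        _ ≤ Nat.card K' := h2
      · omega


lemma log_ineq : ∀ L : ℕ, 10 ≤ L → 4 * (L + 1) * (L + 7) + 4 ≤ 2 ^ L := by
  intro L hL
  induction L with
  | zero => omega
  | succ L ih =>
    rcases Nat.lt_or_ge L 10 with h | h
    · have : L = 9 := by omega
      subst this; norm_num
    · have := ih h
      have h2 : 2 ^ (L + 1) = 2 ^ L + 2 ^ L := by ring
      nlinarith [Nat.one_le_two_pow (n := L)]

lemma choose_adj_up {n k : ℕ} (h : k < n) :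
    Nat.choose n k ≤ Nat.choose n (k + 1) * (n + 1) := by
  calc Nat.choose n k ≤ Nat.choose n k * (n - k) := by
        have : 1 ≤ n - k := by omega
        nlinarith [Nat.choose_pos (le_of_lt h) (n := n) (k := k)]
  _ = Nat.choose n (k+1) * (k+1) := (Nat.choose_succ_right_eq n k).symm
  _ ≤ Nat.choose n (k+1) * (n+1) := Nat.mul_le_mul_left _ (by omega)

lemma choose_adj_down {n k : ℕ} (h : k < n) :
    Nat.choose n (k + 1) ≤ Nat.choose n k * (n + 1) := by
  calc Nat.choose n (k+1) ≤ Nat.choose n (k+1) * (k+1) := Nat.le_mul_of_pos_right _ (by omega)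
  _ = Nat.choose n k * (n - k) := Nat.choose_succ_right_eq n k
  _ ≤ Nat.choose n k * (n+1) := Nat.mul_le_mul_left _ (by omega)

lemma middle_choose (n : ℕ) : 2 ^ n ≤ Nat.choose n (n / 2) * (n + 1) := by
  have h := Nat.sum_range_choose n
  calc 2 ^ n = ∑ i ∈ Finset.range (n+1), Nat.choose n i := h.symm
  _ ≤ ∑ _i ∈ Finset.range (n+1), Nat.choose n (n/2) :=
      Finset.sum_le_sum fun i _ => Nat.choose_le_middle i n
  _ = Nat.choose n (n/2) * (n+1) := by simp [Finset.sum_const, Nat.mul_comm]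

lemma five_choose_big {n k : ℕ} (hn : 8 ≤ n) (h1 : n / 2 - 2 ≤ k) (h2 : k ≤ n / 2 + 2) :
    2 ^ n ≤ Nat.choose n k * (n + 1) ^ 3 := by
  obtain ⟨a, ha⟩ : ∃ a, n / 2 = a + 2 := ⟨n/2 - 2, by omega⟩
  obtain ⟨t, rfl⟩ : ∃ t, k = a + t := ⟨k - a, by omega⟩
  have ht : t ≤ 4 := by omega
  have han : a + 5 < n := by omega
  have key : Nat.choose n (a+2) ≤ Nat.choose n (a+t) * (n+1)^2 := by
    interval_cases t
    · calc Nat.choose n (a+2) ≤ Nat.choose n (a+1) * (n+1) := choose_adj_down (by omega)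
      _ ≤ Nat.choose n a * (n+1) * (n+1) :=
          Nat.mul_le_mul_right _ (choose_adj_down (by omega))
      _ = Nat.choose n (a+0) * (n+1)^2 := by ring_nf
    · calc Nat.choose n (a+2) ≤ Nat.choose n (a+1) * (n+1) := choose_adj_down (by omega)
      _ ≤ Nat.choose n (a+1) * (n+1) * (n+1) := Nat.le_mul_of_pos_right _ (by omega)
      _ = Nat.choose n (a+1) * (n+1)^2 := by ring
    · calc Nat.choose n (a+2) ≤ Nat.choose n (a+2) * (n+1)^2 :=
          Nat.le_mul_of_pos_right _ (by positivity)
      _ = Nat.choose n (a+2) * (n+1)^2 := rfl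
    · calc Nat.choose n (a+2) ≤ Nat.choose n (a+2+1) * (n+1) := choose_adj_up (by omega)
      _ ≤ Nat.choose n (a+3) * (n+1) * (n+1) := Nat.le_mul_of_pos_right _ (by omega)
      _ = Nat.choose n (a+3) * (n+1)^2 := by ring
    · calc Nat.choose n (a+2) ≤ Nat.choose n (a+2+1) * (n+1) := choose_adj_up (by omega)
      _ ≤ Nat.choose n (a+3+1) * (n+1) * (n+1) :=
          Nat.mul_le_mul_right _ (choose_adj_up (by omega))
      _ = Nat.choose n (a+4) * (n+1)^2 := by ring_nf
  calc 2^n ≤ Nat.choose n (n/2) * (n+1) := middle_choose n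
  _ = Nat.choose n (a+2) * (n+1) := by rw [ha]
  _ ≤ Nat.choose n (a+t) * (n+1)^2 * (n+1) := Nat.mul_le_mul_right _ key
  _ = Nat.choose n (a+t) * (n+1)^3 := by ring


open MulAction

variable {Ω : Type} [Fintype Ω] [DecidableEq Ω]

omit [Fintype Ω] [DecidableEq Ω] in
lemma zpow_mem_iff {g : Equiv.Perm Ω} {Δ : Finset Ω} (h : ∀ x, g x ∈ Δ ↔ x ∈ Δ) :
    ∀ (k : ℤ) (x : Ω), (g ^ k) x ∈ Δ ↔ x ∈ Δ := by
  have hinv : ∀ x, g⁻¹ x ∈ Δ ↔ x ∈ Δ := by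
    intro x
    conv_rhs => rw [show x = g (g⁻¹ x) by simp]
    exact (h _).symm
  intro k
  induction k using Int.induction_on with
  | zero => simp
  | succ k ih =>
    intro x
    have : (g ^ ((k : ℤ) + 1)) x = (g ^ (k:ℤ)) (g x) := by
      rw [zpow_add, zpow_one, Equiv.Perm.mul_apply]
    rw [this, ih, h]
  | pred k ih =>
    intro x
    have : (g ^ (-(k : ℤ) - 1)) x = (g ^ (-(k:ℤ))) (g⁻¹ x) := by
      rw [sub_eq_add_neg, zpow_add, Equiv.Perm.mul_apply, zpow_neg_one]
    rw [this, ih, hinv]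

lemma invariant_mem_iff {g : Equiv.Perm Ω} {Δ : Finset Ω} (hΔ : Δ.image g = Δ) :
    ∀ x, g x ∈ Δ ↔ x ∈ Δ := by
  intro x
  constructor
  · intro hx
    rw [← hΔ] at hx
    obtain ⟨y, hy, hxy⟩ := Finset.mem_image.1 hx
    rwa [← g.injective hxy]
  · intro hx
    rw [← hΔ]
    exact Finset.mem_image_of_mem _ hx

lemma invariant_finsets_card (g : Equiv.Perm Ω)
    (hfix : 2 * (Finset.univ.filter fun x => g x = x).card ≤ Fintype.card Ω) :
    ((Finset.univ : Finset (Finset Ω)).filter fun Δ => Δ.image g = Δ).card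
      ≤ 2 ^ ((3 * Fintype.card Ω) / 4) := by
  classical
  set n := Fintype.card Ω with hn
  set Gg := Subgroup.zpowers g with hGg
  letI s : Setoid Ω := orbitRel ↥Gg Ω
  letI : Fintype (Quotient s) := Fintype.ofFinite _
  set q : Ω → Quotient s := Quotient.mk s with hq
  have hrel : ∀ x y : Ω, q y = q x → ∃ k : ℤ, y = (g ^ k) x := by
    intro x y hxy
    obtain ⟨h, hh⟩ := Quotient.exact hxy
    obtain ⟨k, hk⟩ := h.2
    exact ⟨k, by rw [← hh]; simp [← hk, Subgroup.smul_def]⟩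
  set fib : Quotient s → Finset Ω := fun c => Finset.univ.filter fun x => q x = c with hfib
  have hfibmem : ∀ c x, x ∈ fib c ↔ q x = c := by
    intro c x; simp [hfib]
  have hfibne : ∀ c, (fib c).Nonempty := by
    intro c
    obtain ⟨x, rfl⟩ := Quotient.exists_rep c
    exact ⟨x, by simp [hfib]; rfl⟩
  have hsum : ∑ c : Quotient s, (fib c).card = n := by
    rw [← Finset.card_eq_sum_card_fiberwise (f := q) (t := Finset.univ) (fun x _ => Finset.mem_univ _)]
    simp [hn]
  have hQ1 : ∀ c, (fib c).card = 1 → ∃ x, fib c = {x} ∧ g x = x := by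
    intro c hc
    obtain ⟨x, hx⟩ := Finset.card_eq_one.1 hc
    refine ⟨x, hx, ?_⟩
    have hxc : q x = c := (hfibmem c x).1 (hx ▸ Finset.mem_singleton_self x)
    have hgx : g x ∈ fib c := by
      rw [hfibmem, ← hxc]
      exact Quotient.sound ⟨⟨g, Subgroup.mem_zpowers g⟩, rfl⟩
    rw [hx, Finset.mem_singleton] at hgx
    exact hgx
  have hcardQ : 4 * Fintype.card (Quotient s) ≤ 3 * n := by
    set Q1 := Finset.univ.filter fun c : Quotient s => (fib c).card = 1 with hQ1def
    have hQ1F : Q1.card ≤ (Finset.univ.filter fun x => g x = x).card := by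
      apply Finset.card_le_card_of_injOn (fun c => (hfibne c).choose)
      · intro c hc
        obtain ⟨x, hx, hgx⟩ := hQ1 c (by simpa [hQ1def] using hc)
        have hcx : (hfibne c).choose = x :=
          Finset.mem_singleton.1 (by rw [← hx]; exact (hfibne c).choose_spec)
        simp only [Finset.mem_coe, Finset.mem_filter]
        exact ⟨Finset.mem_univ _, by rw [hcx]; exact hgx⟩
      · intro c₁ h₁ c₂ h₂ hch
        have hch' : (hfibne c₁).choose = (hfibne c₂).choose := hch
        have m1 : q ((hfibne c₁).choose) = c₁ := (hfibmem _ _).1 (hfibne c₁).choose_spec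
        have m2 : q ((hfibne c₂).choose) = c₂ := (hfibmem _ _).1 (hfibne c₂).choose_spec
        rw [← m1, ← m2, hch']
    have hsplit : ∑ c ∈ Finset.univ \ Q1, (fib c).card + ∑ c ∈ Q1, (fib c).card = n := by
      rw [Finset.sum_sdiff (Finset.filter_subset _ _)]
      exact hsum
    have h1 : ∑ c ∈ Q1, (fib c).card = Q1.card := by
      rw [Finset.sum_congr rfl (fun c hc => by simpa [hQ1def] using (Finset.mem_filter.1 hc).2)]
      simp
    have h2 : 2 * (Finset.univ \ Q1).card ≤ ∑ c ∈ Finset.univ \ Q1, (fib c).card := by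
      rw [Nat.mul_comm, ← smul_eq_mul]
      apply Finset.card_nsmul_le_sum
      intro c hc
      have hne : (fib c).card ≠ 1 := by
        have := (Finset.mem_sdiff.1 hc).2
        simpa [hQ1def] using this
      have hpos : 1 ≤ (fib c).card := Finset.card_pos.2 (hfibne c)
      omega
    have hcards : (Finset.univ \ Q1).card + Q1.card = Fintype.card (Quotient s) := by
      rw [Finset.card_sdiff_add_card_eq_card (Finset.filter_subset _ _), Finset.card_univ]
    omega
  have hinj : ((Finset.univ : Finset (Finset Ω)).filter fun Δ => Δ.image g = Δ).card
      ≤ Fintype.card (Finset (Quotient s)) := by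
    rw [← Finset.card_univ]
    apply Finset.card_le_card_of_injOn (fun Δ => Δ.image q)
    · intro _ _; exact Finset.mem_univ _
    · intro Δ₁ hΔ₁ Δ₂ hΔ₂ himg
      have i1 := invariant_mem_iff (Finset.mem_filter.1 hΔ₁).2
      have i2 := invariant_mem_iff (Finset.mem_filter.1 hΔ₂).2
      have key : ∀ (Δ Δ' : Finset Ω), (∀ x, g x ∈ Δ' ↔ x ∈ Δ') →
          Δ.image q = Δ'.image q → ∀ x ∈ Δ, x ∈ Δ' := by
        intro Δ Δ' hΔ' himg x hx
        have : q x ∈ Δ'.image q := himg ▸ Finset.mem_image_of_mem q hx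
        obtain ⟨y, hy, hyx⟩ := Finset.mem_image.1 this
        obtain ⟨k, hk⟩ := hrel y x hyx.symm
        rw [hk]
        exact (zpow_mem_iff hΔ' k y).2 hy
      ext x
      exact ⟨fun hx => key Δ₁ Δ₂ i2 himg x hx, fun hx => key Δ₂ Δ₁ i1 himg.symm x hx⟩
  calc ((Finset.univ : Finset (Finset Ω)).filter fun Δ => Δ.image g = Δ).card
      ≤ Fintype.card (Finset (Quotient s)) := hinj
  _ = 2 ^ Fintype.card (Quotient s) := Fintype.card_finset
  _ ≤ 2 ^ ((3 * n) / 4) := Nat.pow_le_pow_right (by omega) (by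
      rw [Nat.le_div_iff_mul_le (by omega)]
      omega)

lemma perm_subgroup_eq_one {Ω : Type} {G : Subgroup (Equiv.Perm Ω)} (g : ↥G)
    (h : ∀ x : Ω, (g : Equiv.Perm Ω) x = x) : g = 1 := by
  ext x
  exact h x

lemma structure_lemma {Ω : Type} [Fintype Ω] [DecidableEq Ω] (G : Subgroup (Equiv.Perm Ω))
    (htrans : MulAction.IsPretransitive ↥G Ω)
    (hprim : ∀ B : Set Ω, MulAction.IsBlock ↥G B → B.Subsingleton ∨ B = Set.univ)
    (hsolv : IsSolvable ↥G) (hcard : 5 ≤ Fintype.card Ω) :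
    (Nat.card ↥G ≤ Fintype.card Ω ^ (Nat.log 2 (Fintype.card Ω) + 1)) ∧
    (∀ g : ↥G, g ≠ 1 →
      2 * (Finset.univ.filter fun x => (g : Equiv.Perm Ω) x = x).card ≤ Fintype.card Ω) := by
  classical
  set n := Fintype.card Ω with hn
  have hnpos : 0 < n := by omega
  have hnt : Nontrivial ↥G := by
    by_contra h
    rw [not_nontrivial_iff_subsingleton] at h
    obtain ⟨x, y, hxy⟩ := Fintype.exists_pair_of_one_lt_card (α := Ω) (by omega)
    obtain ⟨g, hg⟩ := htrans.exists_smul_eq x y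
    rw [Subsingleton.elim g 1, one_smul] at hg
    exact hxy hg
  obtain ⟨m, hm⟩ := hsolv
  have hex : ∃ j, derivedSeries ↥G j = ⊥ := ⟨m, hm⟩
  set k := Nat.find hex with hkdef
  have hk : derivedSeries ↥G k = ⊥ := Nat.find_spec hex
  have hk0 : k ≠ 0 := by
    intro h
    rw [h] at hk
    simp only [derivedSeries_zero] at hk
    obtain ⟨u, v, huv⟩ := hnt
    apply huv
    have hu : u ∈ (⊤ : Subgroup ↥G) := Subgroup.mem_top u
    have hv : v ∈ (⊤ : Subgroup ↥G) := Subgroup.mem_top v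
    rw [hk, Subgroup.mem_bot] at hu hv
    rw [hu, hv]
  set N : Subgroup ↥G := derivedSeries ↥G (k - 1) with hNdef
  have hNbot : N ≠ ⊥ := Nat.find_min hex (by omega)
  have hNnormal : N.Normal := derivedSeries_normal _ _
  have hNcomm : ∀ a b : ↥G, a ∈ N → b ∈ N → a * b = b * a := by
    intro a b ha hb
    have : (open scoped commutatorElement in ⁅a, b⁆) ∈ derivedSeries ↥G k := by
      rw [show k = (k-1) + 1 by omega, derivedSeries_succ]
      exact Subgroup.commutator_mem_commutator ha hb
    rw [hk, Subgroup.mem_bot] at this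
    exact commutatorElement_eq_one_iff_mul_comm.1 this
  have horbs : ∀ x : Ω, (orbit ↥N x).Subsingleton ∨ orbit ↥N x = Set.univ := fun x =>
    hprim _ (MulAction.IsBlock.orbit_of_normal x)
  obtain ⟨x₀, hx₀⟩ : ∃ x₀ : Ω, orbit ↥N x₀ = Set.univ := by
    by_contra hcon
    push_neg at hcon
    have hsub : ∀ x : Ω, (orbit ↥N x).Subsingleton := by
      intro x
      rcases horbs x with h | h
      · exact h
      · exact absurd h (hcon x)
    apply hNbot
    rw [Subgroup.eq_bot_iff_forall]
    intro a ha
    apply perm_subgroup_eq_one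
    intro x
    exact hsub x (mem_orbit x (⟨a, ha⟩ : ↥N)) (mem_orbit_self x)
  -- transitivity of N from any point
  have hNtrans : ∀ y z : Ω, ∃ a : ↥G, a ∈ N ∧ (a : Equiv.Perm Ω) y = z := by
    intro y z
    have hy : y ∈ orbit ↥N x₀ := hx₀ ▸ Set.mem_univ y
    have hz : z ∈ orbit ↥N x₀ := hx₀ ▸ Set.mem_univ z
    obtain ⟨b, hb⟩ := hy
    obtain ⟨c, hc⟩ := hz
    refine ⟨(c : ↥G) * (b : ↥G)⁻¹, N.mul_mem c.2 (N.inv_mem b.2), ?_⟩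
    have hb' : ((b : ↥G) : Equiv.Perm Ω) x₀ = y := hb
    have hc' : ((c : ↥G) : Equiv.Perm Ω) x₀ = z := hc
    have hbinv : (((b : ↥G)⁻¹ : ↥G) : Equiv.Perm Ω) y = x₀ := by
      rw [← hb', show (((b : ↥G)⁻¹ : ↥G) : Equiv.Perm Ω) = ((b : ↥G) : Equiv.Perm Ω)⁻¹ by norm_cast]
      simp
    rw [Subgroup.coe_mul, Equiv.Perm.mul_apply, hbinv, hc']
  -- freeness
  have hfree : ∀ a : ↥G, a ∈ N → ∀ y : Ω, (a : Equiv.Perm Ω) y = y → a = 1 := by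
    intro a ha y hy
    apply perm_subgroup_eq_one
    intro z
    obtain ⟨b, hb, hby⟩ := hNtrans y z
    calc (a : Equiv.Perm Ω) z = (a : Equiv.Perm Ω) ((b : Equiv.Perm Ω) y) := by rw [hby]
    _ = ((a * b : ↥G) : Equiv.Perm Ω) y := by rw [Subgroup.coe_mul, Equiv.Perm.mul_apply]
    _ = ((b * a : ↥G) : Equiv.Perm Ω) y := by rw [hNcomm a b ha hb]
    _ = (b : Equiv.Perm Ω) ((a : Equiv.Perm Ω) y) := by rw [Subgroup.coe_mul, Equiv.Perm.mul_apply]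
    _ = (b : Equiv.Perm Ω) y := by rw [hy]
    _ = z := hby
  -- an element fixing a point and commuting with N is trivial
  have hcent : ∀ (y : Ω) (h : ↥G), (h : Equiv.Perm Ω) y = y →
      (∀ a : ↥G, a ∈ N → h * a = a * h) → h = 1 := by
    intro y h hy hcomm
    apply perm_subgroup_eq_one
    intro z
    obtain ⟨a, ha, hay⟩ := hNtrans y z
    calc (h : Equiv.Perm Ω) z = (h : Equiv.Perm Ω) ((a : Equiv.Perm Ω) y) := by rw [hay]
    _ = ((h * a : ↥G) : Equiv.Perm Ω) y := by rw [Subgroup.coe_mul, Equiv.Perm.mul_apply]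
    _ = ((a * h : ↥G) : Equiv.Perm Ω) y := by rw [hcomm a ha]
    _ = (a : Equiv.Perm Ω) ((h : Equiv.Perm Ω) y) := by rw [Subgroup.coe_mul, Equiv.Perm.mul_apply]
    _ = (a : Equiv.Perm Ω) y := by rw [hy]
    _ = z := hay
  -- N is regular: its cardinality is n
  have hcardN : Nat.card ↥N = n := by
    have hbij : Function.Bijective (fun a : ↥N => ((a : ↥G) : Equiv.Perm Ω) x₀) := by
      constructor
      · intro a b hab
        have hab' : ((a : ↥G) : Equiv.Perm Ω) x₀ = ((b : ↥G) : Equiv.Perm Ω) x₀ := hab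
        have h1 : ((b : ↥G)⁻¹ * (a : ↥G) : ↥G) = 1 := by
          apply hfree _ (N.mul_mem (N.inv_mem b.2) a.2) x₀
          rw [Subgroup.coe_mul, Equiv.Perm.mul_apply, hab',
            show (((b : ↥G)⁻¹ : ↥G) : Equiv.Perm Ω) = ((b : ↥G) : Equiv.Perm Ω)⁻¹ by norm_cast]
          simp
        have hba : (a : ↥G) = (b : ↥G) := by
          rw [inv_mul_eq_one] at h1
          exact h1.symm
        exact Subtype.ext hba
      · intro y
        obtain ⟨a, ha, hay⟩ := hNtrans x₀ y
        exact ⟨⟨a, ha⟩, hay⟩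
    rw [Nat.card_eq_of_bijective _ hbij, Nat.card_eq_fintype_card]
  constructor
  · -- cardinality bound
    obtain ⟨S, hScl, hScard⟩ := exists_small_gens N
    have hSlog : S.card ≤ Nat.log 2 n := by
      rw [Nat.le_log_iff_pow_le (by omega) (by omega)]
      calc 2 ^ S.card ≤ Nat.card ↥N := hScard
      _ = n := hcardN
    -- stabilizer of x₀
    set St := MulAction.stabilizer ↥G x₀ with hSt
    have hStcard : Nat.card ↥St ≤ n ^ Nat.log 2 n := by
      have hinj : Function.Injective
          (fun (h : ↥St) (s : {x // x ∈ S}) =>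
            (⟨(h : ↥G) * (s : ↥G) * (h : ↥G)⁻¹,
              hNnormal.conj_mem _ (hScl ▸ Subgroup.subset_closure (Finset.mem_coe.mpr s.2)) _⟩ :
              ↥N)) := by
        intro h₁ h₂ hF
        have hcomm : ∀ s : ↥G, s ∈ S → ((h₂ : ↥G)⁻¹ * (h₁ : ↥G)) * s = s * ((h₂ : ↥G)⁻¹ * (h₁ : ↥G)) := by
          intro s hs
          have := congrFun hF ⟨s, hs⟩
          have heq : (h₁ : ↥G) * s * (h₁ : ↥G)⁻¹ = (h₂ : ↥G) * s * (h₂ : ↥G)⁻¹ :=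
            congrArg Subtype.val this
          have e2 : (h₂ : ↥G)⁻¹ * ((h₁ : ↥G) * s * (h₁ : ↥G)⁻¹) * (h₂ : ↥G) = s := by
            rw [heq]; group
          calc ((h₂ : ↥G)⁻¹ * (h₁ : ↥G)) * s
              = ((h₂ : ↥G)⁻¹ * ((h₁ : ↥G) * s * (h₁ : ↥G)⁻¹) * (h₂ : ↥G)) *
                ((h₂ : ↥G)⁻¹ * (h₁ : ↥G)) := by group
          _ = s * ((h₂ : ↥G)⁻¹ * (h₁ : ↥G)) := by rw [e2]
        have hle : N ≤ Subgroup.centralizer {(h₂ : ↥G)⁻¹ * (h₁ : ↥G)} := by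
          rw [← hScl]
          apply (Subgroup.closure_le _).2
          intro s hs
          exact SetLike.mem_coe.mpr (Subgroup.mem_centralizer_singleton_iff.mpr (hcomm s hs).symm)
        have hfix : (((h₂ : ↥G)⁻¹ * (h₁ : ↥G) : ↥G) : Equiv.Perm Ω) x₀ = x₀ := by
          have h1x : ((h₁ : ↥G) : Equiv.Perm Ω) x₀ = x₀ := h₁.2
          have h2x : ((h₂ : ↥G) : Equiv.Perm Ω) x₀ = x₀ := h₂.2
          rw [Subgroup.coe_mul, Equiv.Perm.mul_apply, h1x]
          calc (((h₂:↥G)⁻¹ : ↥G) : Equiv.Perm Ω) x₀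
              = (((h₂:↥G)⁻¹ : ↥G) : Equiv.Perm Ω) (((h₂ : ↥G) : Equiv.Perm Ω) x₀) := by rw [h2x]
          _ = ((((h₂:↥G)⁻¹ * (h₂ : ↥G)) : ↥G) : Equiv.Perm Ω) x₀ := by
                rw [Subgroup.coe_mul, Equiv.Perm.mul_apply]
          _ = x₀ := by simp
        have : (h₂ : ↥G)⁻¹ * (h₁ : ↥G) = 1 := by
          apply hcent x₀ _ hfix
          intro a ha
          have := hle ha
          rw [Subgroup.mem_centralizer_singleton_iff] at this
          exact this.symm
        have : (h₁ : ↥G) = (h₂ : ↥G) := by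
          rw [inv_mul_eq_one] at this
          exact this.symm
        exact Subtype.ext this
      calc Nat.card ↥St ≤ Nat.card ({x // x ∈ S} → ↥N) := Nat.card_le_card_of_injective _ hinj
      _ = Nat.card ↥N ^ Nat.card ↥(S : Set ↥G) := Nat.card_fun
      _ = n ^ S.card := by
          rw [hcardN]
          congr 1
          simp [Nat.card_eq_fintype_card]
      _ ≤ n ^ Nat.log 2 n := Nat.pow_le_pow_right (by omega) hSlog
    -- orbit stabilizer
    haveI := htrans
    haveI : Fintype ↥G := Fintype.ofFinite _
    haveI : Fintype (orbit ↥G x₀) := Fintype.ofFinite _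
    haveI : Fintype ↥St := Fintype.ofFinite _
    have horbst := MulAction.card_orbit_mul_card_stabilizer_eq_card_group ↥G x₀
    have horbn : Fintype.card (orbit ↥G x₀) = n := by
      have h : orbit ↥G x₀ = Set.univ := MulAction.orbit_eq_univ ↥G x₀
      rw [hn]
      exact Fintype.card_congr ((Equiv.setCongr h).trans (Equiv.Set.univ Ω))
    calc Nat.card ↥G = Fintype.card ↥G := Nat.card_eq_fintype_card
    _ = Fintype.card (orbit ↥G x₀) * Fintype.card ↥St := horbst.symm
    _ = n * Fintype.card ↥St := by rw [horbn]
    _ = n * Nat.card ↥St := by rw [Nat.card_eq_fintype_card]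
    _ ≤ n * n ^ Nat.log 2 n := Nat.mul_le_mul_left _ hStcard
    _ = n ^ (Nat.log 2 n + 1) := by ring
  · -- fixed point bound
    intro g hg
    by_cases hfx : ∃ y : Ω, (g : Equiv.Perm Ω) y = y
    · obtain ⟨y₀, hy₀⟩ := hfx
      set K := N ⊓ Subgroup.centralizer {(g : ↥G)} with hK
      have hKN : K ≤ N := inf_le_left
      have hKne : K ≠ N := by
        intro hEq
        apply hg
        apply hcent y₀ g hy₀
        intro a ha
        have haK : a ∈ K := hEq.symm ▸ ha
        have hc2 := (Subgroup.mem_inf.mp haK).2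
        rw [Subgroup.mem_centralizer_singleton_iff] at hc2
        exact hc2.symm
      have hKcard : 2 * Nat.card ↥K ≤ n := by
        have hdvd : Nat.card ↥K ∣ Nat.card ↥N := Subgroup.card_dvd_of_le hKN
        have hne : Nat.card ↥K ≠ Nat.card ↥N := by
          intro hEq
          exact hKne (subgroup_eq_of_le_of_card_le hKN hEq.ge)
        rw [← hcardN]
        exact divisor_le_half hdvd hne Nat.card_pos.ne'
      -- injection of fixed points into K
      have hfixK : (Finset.univ.filter fun x => (g : Equiv.Perm Ω) x = x).card ≤ Nat.card ↥K := by
        have : Nat.card ↥K = (K : Set ↥G).toFinset.card := by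
          rw [Set.toFinset_card, Nat.card_eq_fintype_card]
          rfl
        rw [this]
        apply Finset.card_le_card_of_injOn (fun y => (hNtrans y₀ y).choose)
        · intro y hy
          rw [Finset.mem_coe, Finset.mem_filter] at hy
          obtain ⟨haN, hay⟩ := (hNtrans y₀ y).choose_spec
          set a := (hNtrans y₀ y).choose with hadef
          set c := (g : ↥G) * a * (g : ↥G)⁻¹ with hc
          have hcN : c ∈ N := hNnormal.conj_mem _ haN _
          have hginv : (g : Equiv.Perm Ω)⁻¹ y₀ = y₀ := by
            conv_lhs => rw [← hy₀]
            simp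
          have hcy : (c : Equiv.Perm Ω) y₀ = (a : Equiv.Perm Ω) y₀ := by
            rw [hc]
            rw [Subgroup.coe_mul, Subgroup.coe_mul, Equiv.Perm.mul_apply, Equiv.Perm.mul_apply]
            simp only [InvMemClass.coe_inv]
            rw [hginv, hay]
            exact hy.2
          have : a⁻¹ * c = 1 := by
            apply hfree _ (N.mul_mem (N.inv_mem haN) hcN) y₀
            rw [Subgroup.coe_mul, Equiv.Perm.mul_apply, hcy]
            simp only [InvMemClass.coe_inv]
            simp
          have hca' : a = c := inv_mul_eq_one.mp this
          have hca : (g : ↥G) * a * (g : ↥G)⁻¹ = a := by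
            rw [← hc]
            exact hca'.symm
          have hfinal : a * (g : ↥G) = (g : ↥G) * a := by
            calc a * (g : ↥G) = ((g : ↥G) * a * (g : ↥G)⁻¹) * (g : ↥G) := by rw [hca]
            _ = (g : ↥G) * a := by group
          simp only [Finset.mem_coe, Set.mem_toFinset]
          exact SetLike.mem_coe.mpr
            (Subgroup.mem_inf.mpr
              ⟨haN, Subgroup.mem_centralizer_singleton_iff.mpr hfinal⟩)
        · intro y₁ h₁ y₂ h₂ hch
          have hch' : (hNtrans y₀ y₁).choose = (hNtrans y₀ y₂).choose := hch
          obtain ⟨_, hay₁⟩ := (hNtrans y₀ y₁).choose_spec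
          obtain ⟨_, hay₂⟩ := (hNtrans y₀ y₂).choose_spec
          rw [← hay₁, ← hay₂, hch']
      omega
    · push_neg at hfx
      have : (Finset.univ.filter fun x => (g : Equiv.Perm Ω) x = x).card = 0 := by
        rw [Finset.card_eq_zero, Finset.filter_eq_empty_iff]
        intro x _
        exact hfx x
      omega

lemma exists_asym {Ω : Type} [Fintype Ω] [DecidableEq Ω] (G : Subgroup (Equiv.Perm Ω)) (k : ℕ)
    [Fintype ↥G]
    (hfixb : ∀ g : ↥G, g ≠ 1 →
      2 * (Finset.univ.filter fun x => (g : Equiv.Perm Ω) x = x).card ≤ Fintype.card Ω)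
    (hbig : Fintype.card ↥G * 2 ^ ((3 * Fintype.card Ω) / 4) ≤ (Fintype.card Ω).choose k) :
    ∃ Δ : Finset Ω, Δ.card = k ∧
      ∀ g : ↥G, Δ.image ⇑(g : Equiv.Perm Ω) = Δ → g = 1 := by
  classical
  set n := Fintype.card Ω with hn
  by_contra hcon
  push_neg at hcon
  set T := Finset.powersetCard k (Finset.univ : Finset Ω) with hT
  set B := (Finset.univ.erase (1 : ↥G)).biUnion
    (fun g => Finset.univ.filter fun Δ : Finset Ω => Δ.image ⇑(g : Equiv.Perm Ω) = Δ) with hB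
  have hTB : T ⊆ B := by
    intro Δ hΔ
    have hcard : Δ.card = k := (Finset.mem_powersetCard_univ).1 hΔ
    obtain ⟨g, hgim, hgne⟩ := hcon Δ hcard
    rw [hB, Finset.mem_biUnion]
    exact ⟨g, Finset.mem_erase.2 ⟨hgne, Finset.mem_univ g⟩,
      Finset.mem_filter.2 ⟨Finset.mem_univ _, hgim⟩⟩
  have hTcard : T.card = n.choose k := by
    rw [hT, Finset.card_powersetCard, Finset.card_univ]
  have hBcard : B.card ≤ (Fintype.card ↥G - 1) * 2 ^ ((3 * n) / 4) := by
    calc B.card ≤ ∑ g ∈ Finset.univ.erase (1 : ↥G),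
        ((Finset.univ : Finset (Finset Ω)).filter
          fun Δ => Δ.image ⇑(g : Equiv.Perm Ω) = Δ).card := Finset.card_biUnion_le
    _ ≤ ∑ _g ∈ Finset.univ.erase (1 : ↥G), 2 ^ ((3 * n) / 4) := by
        apply Finset.sum_le_sum
        intro g hg
        exact invariant_finsets_card _ (hfixb g (Finset.mem_erase.1 hg).1)
    _ = (Finset.univ.erase (1 : ↥G)).card * 2 ^ ((3 * n) / 4) := by
        rw [Finset.sum_const, smul_eq_mul]
    _ = (Fintype.card ↥G - 1) * 2 ^ ((3 * n) / 4) := by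
        rw [Finset.card_erase_of_mem (Finset.mem_univ _), Finset.card_univ]
  have h1 : 1 ≤ Fintype.card ↥G := Fintype.card_pos
  have h2 : 1 ≤ 2 ^ ((3 * n) / 4) := Nat.one_le_two_pow
  have hle' : 2 ^ ((3 * n) / 4) ≤ Fintype.card ↥G * 2 ^ ((3 * n) / 4) :=
    Nat.le_mul_of_pos_left _ h1
  have hsub : (Fintype.card ↥G - 1) * 2 ^ ((3 * n) / 4)
      = Fintype.card ↥G * 2 ^ ((3 * n) / 4) - 2 ^ ((3 * n) / 4) := by
    rw [Nat.sub_one_mul]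
  have := Finset.card_le_card hTB
  omega

lemma grand_ineq {n k cG : ℕ} (hn : 1024 ≤ n) (hG : cG ≤ n ^ (Nat.log 2 n + 1))
    (h1 : n / 2 - 2 ≤ k) (h2 : k ≤ n / 2 + 2) :
    cG * 2 ^ ((3 * n) / 4) ≤ n.choose k := by
  set L := Nat.log 2 n with hL
  have hL10 : 10 ≤ L := (Nat.le_log_iff_pow_le (by omega) (by omega)).2 (by norm_num; omega)
  have h2L : 2 ^ L ≤ n := Nat.pow_log_le_self 2 (by omega)
  have hlt : n < 2 ^ (L + 1) := Nat.lt_pow_succ_log_self (by omega) n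
  have hB : 4 * ((L + 1) * (L + 7)) + 4 ≤ n := by
    have := log_ineq L hL10
    calc 4 * ((L + 1) * (L + 7)) + 4 = 4 * (L + 1) * (L + 7) + 4 := by ring
    _ ≤ 2 ^ L := this
    _ ≤ n := h2L
  have hAB : (L + 1) * (L + 4) ≤ (L + 1) * (L + 7) := Nat.mul_le_mul_left _ (by omega)
  have hexp : (L + 1) * (L + 1) + ((3 * n) / 4 + 3 * (L + 1)) ≤ n := by
    have hid : (L + 1) * (L + 1) + 3 * (L + 1) = (L + 1) * (L + 4) := by ring
    omega
  have hmain : cG * 2 ^ ((3 * n) / 4) * (n + 1) ^ 3 ≤ 2 ^ n := by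
    calc cG * 2 ^ ((3 * n) / 4) * (n + 1) ^ 3
        ≤ n ^ (L + 1) * 2 ^ ((3 * n) / 4) * (n + 1) ^ 3 := by
          apply Nat.mul_le_mul_right
          exact Nat.mul_le_mul_right _ hG
    _ ≤ (2 ^ (L + 1)) ^ (L + 1) * 2 ^ ((3 * n) / 4) * (2 ^ (L + 1)) ^ 3 := by
          apply Nat.mul_le_mul
          apply Nat.mul_le_mul_right
          · exact Nat.pow_le_pow_left (by omega) _
          · exact Nat.pow_le_pow_left (by omega) _
    _ = 2 ^ ((L + 1) * (L + 1) + ((3 * n) / 4 + 3 * (L + 1))) := by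
          rw [← Nat.pow_mul, ← Nat.pow_mul, ← Nat.pow_add, ← Nat.pow_add]
          ring_nf
    _ ≤ 2 ^ n := Nat.pow_le_pow_right (by omega) hexp
  have hfive := five_choose_big (by omega) h1 h2
  have := hmain.trans hfive
  exact Nat.le_of_mul_le_mul_right this (by positivity)

/-- **Five asymmetric subsets of pairwise different sizes.**
There is a constant `c₀` such that every primitive solvable permutation group
`G ≤ Sym(Ω)` of degree `|Ω| ≥ c₀` admits at least five `G`-asymmetric subsets of
pairwise different sizes: there are `Δ₁, …, Δ₅ ⊆ Ω` of pairwise distinct sizes, each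
with trivial setwise stabilizer in `G`. -/
theorem primitive_solvable_five_asymmetric_sizes :
    ∃ c₀ : ℕ, ∀ (Ω : Type) [Fintype Ω] (G : Subgroup (Equiv.Perm Ω)),
      MulAction.IsPretransitive ↥G Ω →
      (∀ B : Set Ω, MulAction.IsBlock ↥G B → B.Subsingleton ∨ B = Set.univ) →
      IsSolvable ↥G →
      c₀ ≤ Fintype.card Ω →
      ∃ Δ : Fin 5 → Set Ω,
        (∀ i j : Fin 5, i ≠ j → (Δ i).ncard ≠ (Δ j).ncard) ∧
        (∀ i : Fin 5, setwiseStabilizer G (Δ i) = ⊥) := by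
  classical
  refine ⟨1024, ?_⟩
  intro Ω _ G htrans hprim hsolv hcard
  classical
  set n := Fintype.card Ω with hn
  obtain ⟨hG, hfixb⟩ := structure_lemma G htrans hprim hsolv (by omega)
  haveI : Fintype ↥G := Fintype.ofFinite _
  have hGf : Fintype.card ↥G ≤ n ^ (Nat.log 2 n + 1) := by
    rw [← Nat.card_eq_fintype_card]; exact hG
  have key : ∀ i : Fin 5, ∃ Δ : Finset Ω, Δ.card = n / 2 - 2 + (i : ℕ) ∧
      ∀ g : ↥G, Δ.image ⇑(g : Equiv.Perm Ω) = Δ → g = 1 := by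
    intro i
    apply exists_asym
    · exact hfixb
    · exact grand_ineq (by omega) hGf (by omega) (by have := i.isLt; omega)
  choose D hDcard hDasym using key
  refine ⟨fun i => (D i : Set Ω), ?_, ?_⟩
  · intro i j hij
    rw [Set.ncard_coe_finset, Set.ncard_coe_finset, hDcard, hDcard]
    have hvij : (i : ℕ) ≠ (j : ℕ) := fun h => hij (Fin.ext h)
    omega
  · intro i
    rw [Subgroup.eq_bot_iff_forall]
    intro g hgmem
    have himg : (g : Equiv.Perm Ω) '' (D i : Set Ω) = (D i : Set Ω) := hgmem
    rw [← Finset.coe_image] at himg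
    exact hDasym i g (Finset.coe_inj.1 himg)
end
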